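/- arXiv:1908.05587 — 4 statements merged into one kernel-verified Lean document; each statement's English description precedes it below -/
import Mathlib

section
/- Let f = a₀ + a₁x + ⋯ + aₙxⁿ ∈ ℤ[x] be a primitive polynomial such that each complex zero θ of f satisfies |θ| > d, where a₀ = ±pᵏ·d for positive integers k, d and a prime p not dividing d. Suppose j ∈ {1,…,n} satisfies gcd(k,j) = 1, pᵏ divides gcd(a₀, a₁, …, a_{j−1}), and, in case k > 1, p does not divide aⱼ. Then f is irreducible in ℤ[x]. -/
/-!
If `f = g * h` with both factors nonconstant, then `|g(0)| > d` and `|h(0)| > d`, since up to the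
leading coefficient `g(0)` is the product of the zeros of `g`, all of which are zeros of `f`. As
`|g(0) h(0)| = p ^ k d` with `p ∤ d`, the prime `p` divides both, so `k = v_p(g(0)) + v_p(h(0))`
with both summands positive. The hypotheses say that the `p`-adic Newton polygon of `f` starts
with the edge from `(0, k)` to `(j, 0)`, which has no interior lattice point because
`gcd(k, j) = 1`. Newton polygons add under multiplication, so this edge would have to be split
at a lattice point between `g` and `h`, which is impossible.

The edge is captured by the weight `j * v_p(aₙ) + k * n`: its minimum and the last index where
the minimum is attained are both additive under products.
-/

open Polynomial Finset

namespace AddValuation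

variable {R : Type*} [CommRing R] (v : AddValuation R ℕ∞)

noncomputable def scale {j : ℕ} (hj : j ≠ 0) : AddValuation R ℕ∞ :=
  v.map (AddMonoidHom.mulLeft (j : ℕ∞)) (ENat.mul_top (by exact_mod_cast hj))
    fun _ _ h => mul_le_mul_right h _

@[simp]
theorem scale_apply {j : ℕ} (hj : j ≠ 0) (x : R) : v.scale hj x = j * v x := rfl

theorem le_map_sum_add {ι : Type*} {s : Finset ι} {f : ι → R} {W : ℕ∞} {c : ℕ}
    (h : ∀ i ∈ s, W ≤ v (f i) + c) : W ≤ v (∑ i ∈ s, f i) + c := by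
  simp_rw [← tsub_le_iff_right] at h ⊢
  exact v.map_le_sum h

end AddValuation

theorem Multiset.lt_prod_of_forall_lt {s : Multiset ℝ} {d : ℝ} (hd : 1 ≤ d) (hs : s ≠ 0)
    (h : ∀ x ∈ s, d < x) : d < s.prod := by
  induction s using Multiset.induction_on with
  | empty => exact absurd rfl hs
  | cons a s ih =>
    rw [Multiset.prod_cons]
    have ha := h a (Multiset.mem_cons_self a s)
    rcases eq_or_ne s 0 with rfl | hs'
    · simpa using ha
    · have := ih hs' fun x hx => h x (Multiset.mem_cons_of_mem hx)
      nlinarith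

theorem Int.prime_dvd_of_dvd_pow_mul_of_lt_abs {p x d : ℤ} (hp : Prime p) {k : ℕ}
    (hx : x ∣ p ^ k * d) (hd : 0 < d) (hlt : d < |x|) : p ∣ x := by
  by_contra h
  have hxd : x ∣ d := (hp.irreducible.coprime_pow_of_not_dvd k h).dvd_of_dvd_mul_left hx
  exact hlt.not_ge (Int.le_of_dvd hd ((abs_dvd x d).2 hxd))

namespace Polynomial

theorem IsPrimitive.irreducible_of_forall_natDegree_eq_zero {R : Type*}
    [CommSemiring R] {f : R[X]} (hf : f.IsPrimitive) (hu : ¬IsUnit f)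
    (hfac : ∀ g h : R[X], f = g * h → g.natDegree = 0 ∨ h.natDegree = 0) : Irreducible f := by
  refine ⟨hu, fun g h hfgh => ?_⟩
  rcases hfac g h hfgh with hg | hh
  · obtain ⟨c, rfl⟩ := natDegree_eq_zero.1 hg
    exact .inl (isUnit_C.2 (hf c ⟨h, hfgh⟩))
  · obtain ⟨c, rfl⟩ := natDegree_eq_zero.1 hh
    exact .inr (isUnit_C.2 (hf c ⟨g, hfgh.trans (mul_comm _ _)⟩))

theorem lt_abs_coeff_zero_of_forall_lt_norm {g : ℤ[X]} {d : ℝ} (hd : 1 ≤ d)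
    (hg : g.natDegree ≠ 0) (hroots : ∀ z : ℂ, aeval z g = 0 → d < ‖z‖) :
    d < |(g.coeff 0 : ℝ)| := by
  have hg0 : g ≠ 0 := by rintro rfl; simp at hg
  have hinj : Function.Injective (algebraMap ℤ ℂ) := RingHom.injective_int _
  have hsplit : (g.map (algebraMap ℤ ℂ)).Splits := IsAlgClosed.splits _
  have hroots_ne : g.aroots ℂ ≠ 0 := by
    rw [← Multiset.card_pos, aroots, ← hsplit.natDegree_eq_card_roots,
      natDegree_map_eq_of_injective hinj]
    exact Nat.pos_of_ne_zero hg
  have hprod : d < ((g.aroots ℂ).map (‖·‖)).prod :=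
    Multiset.lt_prod_of_forall_lt hd (by simpa using hroots_ne)
      (Multiset.forall_mem_map_iff.2 fun z hz => hroots z (mem_aroots.1 hz).2)
  have hlc : (1 : ℝ) ≤ ‖(g.leadingCoeff : ℂ)‖ := by
    rw [Complex.norm_intCast]
    exact_mod_cast Int.one_le_abs (leadingCoeff_ne_zero.2 hg0)
  have hvieta : (g.coeff 0 : ℂ) = (-1) ^ g.natDegree * g.leadingCoeff * (g.aroots ℂ).prod := by
    have := hsplit.coeff_zero_eq_leadingCoeff_mul_prod_roots
    rwa [coeff_map, leadingCoeff_map_of_injective hinj, natDegree_map_eq_of_injective hinj,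
      eq_intCast, eq_intCast] at this
  calc d < ((g.aroots ℂ).map (‖·‖)).prod := hprod
    _ ≤ ‖(g.leadingCoeff : ℂ)‖ * ((g.aroots ℂ).map (‖·‖)).prod :=
      le_mul_of_one_le_left ((zero_le_one.trans hd).trans hprod.le) hlc
    _ = |(g.coeff 0 : ℝ)| := by
      rw [← Complex.norm_intCast, hvieta, norm_mul, norm_mul, norm_pow, norm_neg, norm_one,
        one_pow, one_mul]
      exact congrArg _ (map_multiset_prod (normHom : ℂ →*₀ ℝ) _).symm

section WeightedVal

variable {R : Type*} [CommRing R] (v : AddValuation R ℕ∞) (γ : ℕ)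

/-- The indices minimising this weight span the face of slope `-γ` of the Newton polygon of `g`
with respect to `v`. -/
def weightedVal (g : R[X]) (n : ℕ) : ℕ∞ := v (g.coeff n) + (n * γ : ℕ)

structure IsLastMinWeight (g : R[X]) (W : ℕ∞) (L : ℕ) : Prop where
  le : ∀ n, W ≤ weightedVal v γ g n
  eq : weightedVal v γ g L = W
  lt : ∀ n, L < n → W < weightedVal v γ g n

variable {v γ} {g h : R[X]} {Wg Wh : ℕ∞} {Lg Lh : ℕ}

theorem weightedVal_eq_top {n : ℕ} (hn : g.coeff n = 0) : weightedVal v γ g n = ⊤ := by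
  simp [weightedVal, hn]

theorem weightedVal_mul_term (l m : ℕ) :
    v (g.coeff l * h.coeff m) + ((l + m) * γ : ℕ) = weightedVal v γ g l + weightedVal v γ h m := by
  simp only [weightedVal, v.map_mul, add_mul, Nat.cast_add]
  ring

theorem exists_isLastMinWeight (hg : ∃ n, v (g.coeff n) ≠ ⊤) :
    ∃ W L, IsLastMinWeight v γ g W L := by
  set W := ⨅ n, weightedVal v γ g n
  obtain ⟨n₀, hn₀⟩ : W ∈ Set.range (weightedVal v γ g) := csInf_mem (Set.range_nonempty _)
  obtain ⟨n₁, hn₁⟩ := hg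
  have hW : W ≠ ⊤ :=
    ne_top_of_le_ne_top (WithTop.add_ne_top.2 ⟨hn₁, ENat.natCast_ne_top _⟩) (iInf_le _ n₁)
  have hn₀deg : n₀ ≤ g.natDegree :=
    le_natDegree_of_ne_zero fun h => hW (hn₀ ▸ weightedVal_eq_top h)
  refine ⟨W, Nat.findGreatest (weightedVal v γ g · = W) g.natDegree, iInf_le _,
    Nat.findGreatest_spec (P := (weightedVal v γ g · = W)) hn₀deg hn₀, fun n hn => ?_⟩
  refine lt_of_le_of_ne (iInf_le _ n) fun h => ?_
  rcases le_or_gt n g.natDegree with hn' | hn'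
  · exact Nat.findGreatest_is_greatest hn hn' h.symm
  · exact hW (h.trans (weightedVal_eq_top (coeff_eq_zero_of_natDegree_lt hn')))

theorem IsLastMinWeight.unique {W' : ℕ∞} {L' : ℕ} (hg : IsLastMinWeight v γ g Wg Lg)
    (hg' : IsLastMinWeight v γ g W' L') : Wg = W' ∧ Lg = L' := by
  have hW : Wg = W' := le_antisymm (hg'.eq ▸ hg.le L') (hg.eq ▸ hg'.le Lg)
  refine ⟨hW, le_antisymm (not_lt.1 fun hL => ?_) (not_lt.1 fun hL => ?_)⟩
  · exact (hg'.lt Lg hL).ne (hW ▸ hg.eq).symm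
  · exact (hg.lt L' hL).ne (hW ▸ hg'.eq).symm

theorem IsLastMinWeight.ne_top (hg : IsLastMinWeight v γ g Wg Lg) : Wg ≠ ⊤ :=
  (hg.lt (Lg + 1) Lg.lt_succ_self).ne_top

theorem IsLastMinWeight.natCast_mul_le (hg : IsLastMinWeight v γ g Wg Lg) :
    ((Lg * γ : ℕ) : ℕ∞) ≤ Wg :=
  hg.eq ▸ le_add_self

theorem IsLastMinWeight.le_term (hg : IsLastMinWeight v γ g Wg Lg)
    (hh : IsLastMinWeight v γ h Wh Lh) (l m : ℕ) :
    Wg + Wh ≤ v (g.coeff l * h.coeff m) + ((l + m) * γ : ℕ) := by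
  rw [weightedVal_mul_term]
  exact add_le_add (hg.le l) (hh.le m)

theorem IsLastMinWeight.add_one_le_term (hg : IsLastMinWeight v γ g Wg Lg)
    (hh : IsLastMinWeight v γ h Wh Lh) {l m : ℕ} (hlm : Lg < l ∨ Lh < m) :
    Wg + Wh + 1 ≤ v (g.coeff l * h.coeff m) + ((l + m) * γ : ℕ) := by
  rw [weightedVal_mul_term]
  rcases hlm with hl | hm
  · rw [add_right_comm]
    exact add_le_add ((ENat.add_one_le_iff hg.ne_top).2 (hg.lt l hl)) (hh.le m)
  · rw [add_assoc]
    exact add_le_add (hg.le l) ((ENat.add_one_le_iff hh.ne_top).2 (hh.lt m hm))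

theorem IsLastMinWeight.mul (hg : IsLastMinWeight v γ g Wg Lg)
    (hh : IsLastMinWeight v γ h Wh Lh) : IsLastMinWeight v γ (g * h) (Wg + Wh) (Lg + Lh) := by
  have hW : Wg + Wh ≠ ⊤ := WithTop.add_ne_top.2 ⟨hg.ne_top, hh.ne_top⟩
  refine ⟨fun n => ?_, ?_, fun n hn => ?_⟩
  · rw [weightedVal, coeff_mul]
    refine v.le_map_sum_add fun x hx => ?_
    rw [← mem_antidiagonal.1 hx]
    exact hg.le_term hh _ _
  · have hmain : v (g.coeff Lg * h.coeff Lh) + ((Lg + Lh) * γ : ℕ) = Wg + Wh := by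
      rw [weightedVal_mul_term, hg.eq, hh.eq]
    have hrest : Wg + Wh + 1 ≤ v (∑ x ∈ (antidiagonal (Lg + Lh)).erase (Lg, Lh),
        g.coeff x.1 * h.coeff x.2) + ((Lg + Lh) * γ : ℕ) := by
      refine v.le_map_sum_add fun ⟨l, m⟩ hx => ?_
      obtain ⟨hne, hx⟩ := Finset.mem_erase.1 hx
      rw [← mem_antidiagonal.1 hx]
      refine hg.add_one_le_term hh ?_
      by_contra! hle
      rw [HasAntidiagonal.mem_antidiagonal] at hx
      dsimp only at hx hle
      exact hne (Prod.ext (by omega) (by omega))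
    rw [weightedVal, coeff_mul, ← add_sum_erase _ _
      (show (Lg, Lh) ∈ antidiagonal (Lg + Lh) from mem_antidiagonal.2 rfl),
      v.map_add_eq_of_lt_left, hmain]
    rw [← hmain, ENat.add_one_le_iff (hmain ▸ hW)] at hrest
    exact lt_of_add_lt_add_right hrest
  · rw [← ENat.add_one_le_iff hW, weightedVal, coeff_mul]
    refine v.le_map_sum_add fun x hx => ?_
    rw [← mem_antidiagonal.1 hx] at hn ⊢
    exact hg.add_one_le_term hh (by omega)

end WeightedVal

section NewtonEdge

variable {R : Type*} [CommRing R] {v : AddValuation R ℕ∞} {f g h : R[X]} {k j : ℕ}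

theorem isLastMinWeight_scale_of_coeff (hj : j ≠ 0) (hk : 0 < k)
    (hlt : ∀ i < j, (k : ℕ∞) ≤ v (f.coeff i)) (hj0 : v (f.coeff j) = 0) :
    IsLastMinWeight (v.scale hj) k f (j * k : ℕ) j := by
  refine ⟨fun n => ?_, by simp [weightedVal, hj0], fun n hn => ?_⟩
  · rw [weightedVal, v.scale_apply]
    rcases lt_or_ge n j with hn | hn
    · push_cast
      exact le_add_right (mul_le_mul_right (hlt n hn) _)
    · exact le_add_left (by gcongr)
  · exact lt_of_lt_of_le (by gcongr) le_add_self

theorem val_coeff_zero_eq_zero_or_of_mul_eq (hfgh : f = g * h) (hj : j ≠ 0)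
    (hkj : k.Coprime j) (h0 : v (f.coeff 0) = k) (hlt : ∀ i < j, (k : ℕ∞) ≤ v (f.coeff i))
    (hj0 : v (f.coeff j) = 0) : v (g.coeff 0) = 0 ∨ v (h.coeff 0) = 0 := by
  have hab : v (g.coeff 0) + v (h.coeff 0) = k := by
    rw [← v.map_mul, ← mul_coeff_zero, ← hfgh, h0]
  rcases k.eq_zero_or_pos with rfl | hk
  · exact .inl (add_eq_zero.1 hab).1
  obtain ⟨a, ha⟩ := ENat.ne_top_iff_exists.1
    (ne_top_of_le_ne_top (ENat.natCast_ne_top k) (hab ▸ le_self_add))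
  obtain ⟨b, hb⟩ := ENat.ne_top_iff_exists.1
    (ne_top_of_le_ne_top (ENat.natCast_ne_top k) (hab ▸ le_add_self))
  rw [← ha, ← hb] at hab ⊢
  obtain ⟨Wg, Lg, hg⟩ := exists_isLastMinWeight (v := v.scale hj) (γ := k) (g := g)
    ⟨0, by rw [v.scale_apply, ← ha]; exact_mod_cast ENat.natCast_ne_top (j * a)⟩
  obtain ⟨Wh, Lh, hh⟩ := exists_isLastMinWeight (v := v.scale hj) (γ := k) (g := h)
    ⟨0, by rw [v.scale_apply, ← hb]; exact_mod_cast ENat.natCast_ne_top (j * b)⟩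
  obtain ⟨hW, hL⟩ := (hfgh ▸ hg.mul hh).unique (isLastMinWeight_scale_of_coeff hj hk hlt hj0)
  have hWg : Wg ≤ (j * a : ℕ) := by simpa [weightedVal, ← ha] using hg.le 0
  have hWh : Wh ≤ (j * b : ℕ) := by simpa [weightedVal, ← hb] using hh.le 0
  lift Wg to ℕ using ne_top_of_le_ne_top (ENat.natCast_ne_top _) hWg
  lift Wh to ℕ using ne_top_of_le_ne_top (ENat.natCast_ne_top _) hWh
  have hLg := hg.natCast_mul_le
  have hLh := hh.natCast_mul_le
  norm_cast at hW hWg hWh hLg hLh hab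
  -- `Lg * k ≤ Wg ≤ j * a` and `Lh * k ≤ Wh ≤ j * b` are tight, as both totals equal `j * k`.
  have hLa : Lg * k = j * a := by
    subst hL hab
    nlinarith
  have hka : k ∣ a := hkj.dvd_of_dvd_mul_left ⟨Lg, by rw [← hLa, mul_comm]⟩
  rcases (Nat.le.intro hab).lt_or_eq with hak | hak
  · simp [Nat.eq_zero_of_dvd_of_lt hka hak]
  · right
    exact_mod_cast (show b = 0 by omega)

end NewtonEdge

end Polynomial

theorem stmt1_general (f : Polynomial ℤ) (d k p j : ℕ) (hd : 0 < d)
    (hp : p.Prime) (hpd : ¬ (p : ℤ) ∣ (d : ℤ))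
    (hprim : f.IsPrimitive)
    (h0 : f.coeff 0 = (p : ℤ) ^ k * d ∨ f.coeff 0 = -((p : ℤ) ^ k * d))
    (hj1 : 1 ≤ j) (hjn : j ≤ f.natDegree)
    (hgcd : Nat.gcd k j = 1)
    (hdvd : ∀ i < j, (p : ℤ) ^ k ∣ f.coeff i)
    (hk1 : 1 < k → ¬ (p : ℤ) ∣ f.coeff j)
    (hroots : ∀ θ : ℂ, Polynomial.aeval θ f = 0 → (d : ℝ) < ‖θ‖) :
    Irreducible f := by
  have hp' : Prime (p : ℤ) := Nat.prime_iff_prime_int.mp hp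
  set v := multiplicity_addValuation hp'
  have hv0 : v (f.coeff 0) = k := by
    have : emultiplicity (p : ℤ) ((p : ℤ) ^ k * d) = k := by
      rw [emultiplicity_mul hp', emultiplicity_pow_self_of_prime hp',
        emultiplicity_eq_zero.2 hpd, add_zero]
    rcases h0 with h0 | h0 <;>
      simp only [v, multiplicity_addValuation_apply, h0, emultiplicity_neg, this]
  have hf0 : f.coeff 0 ∣ (p : ℤ) ^ k * d := by rcases h0 with h0 | h0 <;> simp [h0]
  have hp_dvd_factor (q : ℤ[X]) (hq : q ∣ f) (hq0 : q.natDegree ≠ 0) : (p : ℤ) ∣ q.coeff 0 := by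
    obtain ⟨r, rfl⟩ := hq
    refine Int.prime_dvd_of_dvd_pow_mul_of_lt_abs hp'
      ((mul_coeff_zero q r ▸ dvd_mul_right _ _).trans hf0) (by exact_mod_cast hd) ?_
    exact_mod_cast lt_abs_coeff_zero_of_forall_lt_norm (by exact_mod_cast hd) hq0
      fun z hz => hroots z (by simp [hz])
  refine hprim.irreducible_of_forall_natDegree_eq_zero
    (fun hu => by have := natDegree_eq_zero_of_isUnit hu; omega) fun g h hfgh => ?_
  by_contra! hdeg
  have hg := hp_dvd_factor g ⟨h, hfgh⟩ hdeg.1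
  have hh := hp_dvd_factor h ⟨g, hfgh.trans (mul_comm _ _)⟩ hdeg.2
  have hk : 1 < k := by
    have hsum : v (g.coeff 0) + v (h.coeff 0) = k := by
      rw [← v.map_mul, ← mul_coeff_zero, ← hfgh, hv0]
    have : (2 : ℕ∞) ≤ k := hsum ▸ add_le_add
      (Order.one_le_iff_pos.2 (dvd_iff_emultiplicity_pos.2 hg))
      (Order.one_le_iff_pos.2 (dvd_iff_emultiplicity_pos.2 hh))
    exact_mod_cast this
  rcases val_coeff_zero_eq_zero_or_of_mul_eq hfgh (by omega) hgcd hv0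
    (fun i hi => le_emultiplicity_of_pow_dvd (hdvd i hi)) (emultiplicity_eq_zero.2 (hk1 hk))
    with hv | hv
  · exact emultiplicity_eq_zero.1 hv hg
  · exact emultiplicity_eq_zero.1 hv hh

theorem stmt1 (f : Polynomial ℤ) (d k p j : ℕ) (hd : 0 < d) (hk : 0 < k)
    (hp : p.Prime) (hpd : ¬ (p : ℤ) ∣ (d : ℤ))
    (hprim : f.IsPrimitive)
    (h0 : f.coeff 0 = (p : ℤ) ^ k * d ∨ f.coeff 0 = -((p : ℤ) ^ k * d))
    (hj1 : 1 ≤ j) (hjn : j ≤ f.natDegree)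
    (hgcd : Nat.gcd k j = 1)
    (hdvd : ∀ i < j, (p : ℤ) ^ k ∣ f.coeff i)
    (hk1 : 1 < k → ¬ (p : ℤ) ∣ f.coeff j)
    (hroots : ∀ θ : ℂ, Polynomial.aeval θ f = 0 → (d : ℝ) < ‖θ‖) :
    Irreducible f :=
  stmt1_general f d k p j hd hp hpd hprim h0 hj1 hjn hgcd hdvd hk1 hroots
end

section
/- Let f = a₀ + ⋯ + aₙxⁿ, f₁ = b₀ + ⋯ + b_m x^m, f₂ = c₀ + ⋯ + c_{n−m} x^{n−m} be non-constant polynomials in ℤ[x] with f = f₁·f₂. Suppose there exist a prime p and positive integers k ≥ 2 and j ≤ n such that pᵏ divides each of a₀, a₁, …, a_{j−1}, p^{k+1} does not divide a₀, and gcd(k,j) = 1. If p divides b₀ and p divides c₀, then p divides aⱼ. -/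
/-!
Give the point `(i, v_p(gᵢ))` of a polynomial `g` the weight `j·v_p(gᵢ) + k·i`, and let `u`, `w`
be the largest indices at which `f₁`, `f₂` have minimal weight. Every other term of
`a_{u+w} = Σ bᵢ c_{u+w-i}` then has larger valuation than `b_u c_w`, so
`v_p(a_{u+w}) = v_p(b_u) + v_p(c_w)`. The minimal weights are at most those at index `0`, which
add up to `j·k` since `v_p(b₀) + v_p(c₀) = v_p(a₀) = k`; together with `p^k ∣ aᵢ` for `i < j`
this leaves only `u + w = 0` or `u + w = j`. In the latter case `k·u = j·v_p(b₀)`, impossible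
for `gcd(k, j) = 1` and `0 < v_p(b₀) < k`. So `u = w = 0`, and then every term of `a_j` has
weight above the minimum, i.e. is divisible by `p`.
-/

open Polynomial Finset.HasAntidiagonal

def IsLastMinimizer {ι β : Type*} [LinearOrder ι] [LinearOrder β] (s : Finset ι) (W : ι → β)
    (u : ι) : Prop :=
  u ∈ s ∧ ∀ i ∈ s, W u ≤ W i ∧ (W u = W i → i ≤ u)

namespace IsLastMinimizer

variable {ι β : Type*} [LinearOrder ι] [LinearOrder β] {s : Finset ι} {W : ι → β} {u : ι}

theorem exists_of_nonempty (hs : s.Nonempty) : ∃ u, IsLastMinimizer s W u := by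
  obtain ⟨u, hu, hmin⟩ := s.exists_min_image (fun i => toLex (W i, OrderDual.toDual i)) hs
  exact ⟨u, hu, fun i hi => Prod.Lex.toLex_le_toLex'.mp (hmin i hi)⟩

theorem le_and_le_of_add_le [AddCommMonoid β] [IsOrderedCancelAddMonoid β] {t : Finset ι}
    {V : ι → β} {w i i' : ι} (hu : IsLastMinimizer s W u) (hw : IsLastMinimizer t V w)
    (hi : i ∈ s) (hi' : i' ∈ t) (h : W i + V i' ≤ W u + V w) : i ≤ u ∧ i' ≤ w := by
  have hWi := (hu.2 i hi).1
  have hVi := (hw.2 i' hi').1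
  have hW : W u = W i :=
    le_antisymm hWi (le_of_add_le_add_right (h.trans (add_le_add_right hVi _)))
  have hV : V w = V i' :=
    le_antisymm hVi (le_of_add_le_add_left (h.trans (add_le_add_left hWi _)))
  exact ⟨(hu.2 i hi).2 hW, (hw.2 i' hi').2 hV⟩

end IsLastMinimizer

/-- The point `(i, v_p(gᵢ))` of the Newton diagram of `g` paired with the direction `(k, j)`:
its minimizers lie on a supporting line of slope `-k / j`. -/
def newtonWeight (p j k : ℕ) (g : ℤ[X]) (i : ℕ) : ℕ := j * padicValInt p (g.coeff i) + k * i

section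

variable {p : ℕ} [Fact p.Prime]

theorem padicValInt_pos_of_dvd {x : ℤ} (hx : x ≠ 0) (h : (p : ℤ) ∣ x) : 0 < padicValInt p x :=
  Nat.pos_of_ne_zero (by simp [padicValInt.eq_zero_iff, (Fact.out : p.Prime).ne_one, hx, h])

theorem padicValInt_eq_of_pow_dvd_of_not_pow_succ_dvd {n : ℕ} {x : ℤ} (h : (p : ℤ) ^ n ∣ x)
    (h' : ¬ (p : ℤ) ^ (n + 1) ∣ x) : padicValInt p x = n := by
  rw [padicValInt_dvd_iff] at h h'
  omega

theorem pow_dvd_mul_of_le_padicValInt {n : ℕ} {x y : ℤ}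
    (h : x ≠ 0 → y ≠ 0 → n ≤ padicValInt p x + padicValInt p y) : (p : ℤ) ^ n ∣ x * y := by
  rcases eq_or_ne x 0 with rfl | hx
  · simp
  rcases eq_or_ne y 0 with rfl | hy
  · simp
  rw [padicValInt_dvd_iff, padicValInt.mul hx hy]
  exact Or.inr (h hx hy)

variable {j k u w : ℕ} {g h : ℤ[X]}

theorem not_pow_succ_dvd_coeff_mul_of_isLastMinimizer
    (hu : IsLastMinimizer g.support (newtonWeight p j k g) u)
    (hw : IsLastMinimizer h.support (newtonWeight p j k h) w) :
    ¬ (p : ℤ) ^ (padicValInt p (g.coeff u) + padicValInt p (h.coeff w) + 1) ∣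
      (g * h).coeff (u + w) := by
  rw [coeff_mul, ← Finset.add_sum_erase _ _
    (mem_antidiagonal.mpr rfl : (u, w) ∈ antidiagonal (u + w))]
  intro hdvd
  have hrest : (p : ℤ) ^ (padicValInt p (g.coeff u) + padicValInt p (h.coeff w) + 1) ∣
      ∑ x ∈ (antidiagonal (u + w)).erase (u, w), g.coeff x.1 * h.coeff x.2 := by
    refine Finset.dvd_sum fun x hx => pow_dvd_mul_of_le_padicValInt fun hx₁ hx₂ => ?_
    obtain ⟨hne, hsum⟩ := Finset.mem_erase.mp hx
    rw [mem_antidiagonal] at hsum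
    by_contra! hlt
    have hle := hu.le_and_le_of_add_le hw (mem_support_iff.mpr hx₁) (mem_support_iff.mpr hx₂)
      (by simp only [newtonWeight]; nlinarith)
    exact hne (Prod.ext (by omega) (by omega))
  have hlead := (Int.dvd_add_left hrest).mp hdvd
  have hu0 := mem_support_iff.mp hu.1
  have hw0 := mem_support_iff.mp hw.1
  rw [padicValInt_dvd_iff, padicValInt.mul hu0 hw0] at hlead
  simp [hu0, hw0] at hlead

theorem dvd_coeff_mul_of_add_lt (hu : IsLastMinimizer g.support (newtonWeight p j k g) u)
    (hw : IsLastMinimizer h.support (newtonWeight p j k h) w) {i : ℕ} (hi : u + w < i)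
    (hki : k * i ≤ newtonWeight p j k g u + newtonWeight p j k h w) :
    (p : ℤ) ∣ (g * h).coeff i := by
  rw [coeff_mul]
  refine Finset.dvd_sum fun x hx =>
    pow_one (p : ℤ) ▸ pow_dvd_mul_of_le_padicValInt fun hx₁ hx₂ => ?_
  rw [mem_antidiagonal] at hx
  by_contra! hlt
  obtain ⟨h₁, h₂⟩ : padicValInt p (g.coeff x.1) = 0 ∧ padicValInt p (h.coeff x.2) = 0 := by omega
  have hle := hu.le_and_le_of_add_le hw (mem_support_iff.mpr hx₁) (mem_support_iff.mpr hx₂)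
    (by simp only [newtonWeight, h₁, h₂, ← hx] at hki ⊢; linarith)
  omega

end

theorem add_eq_zero_of_weights_le {j k α β a b u w : ℕ} (hj : 0 < j) (hcop : k.Coprime j)
    (hα : 0 < α) (hβ : 0 < β) (hk : α + β = k)
    (hu : j * a + k * u ≤ j * α) (hw : j * b + k * w ≤ j * β) (hlow : u + w < j → k ≤ a + b) :
    u + w = 0 := by
  subst hk
  rcases lt_or_ge (u + w) j with hlt | hge
  · have := hlow hlt
    nlinarith
  · exfalso
    have ha : a = 0 := by nlinarith
    have hku : (α + β) * u = j * α := by subst ha; nlinarith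
    have := Nat.le_of_dvd hα (hcop.dvd_of_dvd_mul_left ⟨u, hku.symm⟩)
    omega

theorem stmt3_general (f f₁ f₂ : Polynomial ℤ)
    (hmul : f = f₁ * f₂)
    (p k j : ℕ) (hp : p.Prime) (hj1 : 1 ≤ j)
    (hdvd : ∀ i < j, (p : ℤ) ^ k ∣ f.coeff i)
    (hnd : ¬ (p : ℤ) ^ (k + 1) ∣ f.coeff 0)
    (hgcd : Nat.gcd k j = 1)
    (hb0 : (p : ℤ) ∣ f₁.coeff 0) (hc0 : (p : ℤ) ∣ f₂.coeff 0) :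
    (p : ℤ) ∣ f.coeff j := by
  have := Fact.mk hp
  subst hmul
  have hb : f₁.coeff 0 ≠ 0 := fun h => hnd (by simp [mul_coeff_zero, h])
  have hc : f₂.coeff 0 ≠ 0 := fun h => hnd (by simp [mul_coeff_zero, h])
  have hk := padicValInt_eq_of_pow_dvd_of_not_pow_succ_dvd (hdvd 0 hj1) hnd
  rw [mul_coeff_zero, padicValInt.mul hb hc] at hk
  obtain ⟨u, hu⟩ := IsLastMinimizer.exists_of_nonempty (W := newtonWeight p j k f₁)
    ⟨0, mem_support_iff.mpr hb⟩
  obtain ⟨w, hw⟩ := IsLastMinimizer.exists_of_nonempty (W := newtonWeight p j k f₂)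
    ⟨0, mem_support_iff.mpr hc⟩
  have hlow (hlt : u + w < j) : k ≤ padicValInt p (f₁.coeff u) + padicValInt p (f₂.coeff w) := by
    have hpow := hdvd _ hlt
    have hexact := not_pow_succ_dvd_coeff_mul_of_isLastMinimizer hu hw
    rw [padicValInt_dvd_iff] at hpow hexact
    omega
  have huw : u + w = 0 := add_eq_zero_of_weights_le hj1 hgcd (padicValInt_pos_of_dvd hb hb0)
    (padicValInt_pos_of_dvd hc hc0) hk
    (by simpa [newtonWeight] using (hu.2 0 (mem_support_iff.mpr hb)).1)
    (by simpa [newtonWeight] using (hw.2 0 (mem_support_iff.mpr hc)).1) hlow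
  obtain ⟨rfl, rfl⟩ : u = 0 ∧ w = 0 := by omega
  refine dvd_coeff_mul_of_add_lt hu hw hj1 (le_of_eq ?_)
  simp only [newtonWeight, ← hk]
  ring

theorem stmt3 (f f₁ f₂ : Polynomial ℤ)
    (hf₁ : 0 < f₁.natDegree) (hf₂ : 0 < f₂.natDegree)
    (hmul : f = f₁ * f₂)
    (p k j : ℕ) (hp : p.Prime) (hk : 2 ≤ k) (hj1 : 1 ≤ j) (hjn : j ≤ f.natDegree)
    (hdvd : ∀ i < j, (p : ℤ) ^ k ∣ f.coeff i)
    (hnd : ¬ (p : ℤ) ^ (k + 1) ∣ f.coeff 0)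
    (hgcd : Nat.gcd k j = 1)
    (hb0 : (p : ℤ) ∣ f₁.coeff 0) (hc0 : (p : ℤ) ∣ f₂.coeff 0) :
    (p : ℤ) ∣ f.coeff j :=
  stmt3_general f f₁ f₂ hmul p k j hp hj1 hdvd hnd hgcd hb0 hc0
end

section
/- Let f = a₀ + a₁x + ⋯ + aₙxⁿ ∈ ℤ[x] be a primitive polynomial. If for a prime p and positive integers k and n one has gcd(k,n) = 1, pᵏ divides each of a₀, a₁, …, a_{n−1}, p does not divide aₙ, and p^{k+1} does not divide a₀, then f is irreducible in ℤ[x]. -/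
/-!
Take the Gauss norm `‖F‖ = maxᵢ |F.coeff i|_p cⁱ` on `ℤ[X]` with `cⁿ = p⁻ᵏ`. The hypotheses say
that `‖f‖ = cⁿ` is attained both at `i = 0` and at `i = n`. The Gauss norm of a nonarchimedean
absolute value is multiplicative, so if `f = g * h`, then `‖g‖` is also attained at both ends:
`|g.coeff 0|_p = c ^ deg g`, i.e. `n · v_p (g.coeff 0) = k · deg g`. As `gcd (k, n) = 1`, `n`
divides `deg g`, so one of the factors is constant, hence a unit because `f` is primitive.
-/

open Polynomial

namespace Polynomial

theorem IsPrimitive.isUnit_of_dvd_of_natDegree_eq_zero {R : Type*} [CommSemiring R] {f g : R[X]}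
    (hf : f.IsPrimitive) (hgf : g ∣ f) (hg : g.natDegree = 0) : IsUnit g := by
  rw [eq_C_of_natDegree_eq_zero hg] at hgf ⊢
  exact isUnit_C.mpr (hf _ hgf)

theorem IsPrimitive.irreducible_of_forall_mul_eq {R : Type*} [CommRing R] [IsDomain R] {f : R[X]}
    (hf : f.IsPrimitive) (hdeg : 0 < f.natDegree)
    (H : ∀ g h : R[X], f = g * h → g.natDegree = 0 ∨ h.natDegree = 0) : Irreducible f := by
  refine ⟨not_isUnit_of_natDegree_pos f hdeg, fun g h hgh => ?_⟩
  exact (H g h hgh).imp (hf.isUnit_of_dvd_of_natDegree_eq_zero ⟨h, hgh⟩)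
    (hf.isUnit_of_dvd_of_natDegree_eq_zero ⟨g, hgh.trans (mul_comm g h)⟩)

section GaussNorm

variable {R : Type*} [Ring R] {v : AbsoluteValue R ℝ} {c : ℝ}

theorem gaussNorm_eq_of_forall_le (hc : 0 ≤ c) {p : R[X]} {i : ℕ}
    (h : ∀ j, v (p.coeff j) * c ^ j ≤ v (p.coeff i) * c ^ i) :
    p.gaussNorm v c = v (p.coeff i) * c ^ i := by
  obtain ⟨j, hj⟩ := p.exists_eq_gaussNorm v c
  exact le_antisymm (hj ▸ h j) (p.le_gaussNorm v hc i)

theorem gaussNorm_eq_of_gaussNorm_mul_eq (hna : IsNonarchimedean v) (hc : 0 < c) {g h : R[X]}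
    {i j : ℕ} (hcoeff : (g * h).coeff (i + j) = g.coeff i * h.coeff j)
    (hne : (g * h).coeff (i + j) ≠ 0)
    (hnorm : (g * h).gaussNorm v c = v ((g * h).coeff (i + j)) * c ^ (i + j)) :
    g.gaussNorm v c = v (g.coeff i) * c ^ i := by
  rw [hcoeff] at hne hnorm
  have hgi : 0 < v (g.coeff i) := v.pos (left_ne_zero_of_mul hne)
  have hhj : 0 < v (h.coeff j) := v.pos (right_ne_zero_of_mul hne)
  have hprod : v (g.coeff i) * c ^ i * (v (h.coeff j) * c ^ j) =
      g.gaussNorm v c * h.gaussNorm v c := by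
    rw [← gaussNorm_mul hna hc, hnorm, map_mul, pow_add]
    ring
  have hh := h.le_gaussNorm v hc.le j
  exact ((mul_eq_mul_iff_eq_and_eq_of_pos (g.le_gaussNorm v hc.le i) hh
    (mul_pos hgi (pow_pos hc i)) ((mul_pos hhj (pow_pos hc j)).trans_le hh)).1 hprod).1.symm

end GaussNorm

end Polynomial

section PadicAbvInt

variable (p : ℕ) [Fact p.Prime]

noncomputable def padicAbvInt : AbsoluteValue ℤ ℝ :=
  (Rat.AbsoluteValue.padic p).comp (Int.castRingHom ℚ).injective_int

variable {p}

theorem padicAbvInt_apply (x : ℤ) : padicAbvInt p x = padicNorm p x := rfl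

theorem isNonarchimedean_padicAbvInt : IsNonarchimedean (padicAbvInt p) := fun x y => by
  simp only [padicAbvInt_apply]
  exact_mod_cast (padicNorm.nonarchimedean (p := p) (q := x) (r := y))

theorem padicAbvInt_of_ne_zero {x : ℤ} (hx : x ≠ 0) :
    padicAbvInt p x = (p : ℝ) ^ (-(padicValInt p x : ℤ)) := by
  rw [padicAbvInt_apply, padicNorm.eq_zpow_of_nonzero (Int.cast_ne_zero.mpr hx),
    padicValRat.of_int]
  push_cast
  rfl

theorem padicAbvInt_eq_one_of_not_dvd {x : ℤ} (hx : ¬ (p : ℤ) ∣ x) : padicAbvInt p x = 1 := by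
  rw [padicAbvInt_apply, (padicNorm.int_eq_one_iff x).mpr hx, Rat.cast_one]

theorem padicAbvInt_le_of_pow_dvd {k : ℕ} {x : ℤ} (hx : (p : ℤ) ^ k ∣ x) :
    padicAbvInt p x ≤ (p : ℝ) ^ (-(k : ℤ)) := by
  have := padicNorm.dvd_iff_norm_le.mp (by exact_mod_cast hx : ((p ^ k : ℕ) : ℤ) ∣ x)
  rw [padicAbvInt_apply]
  have := (Rat.cast_le (K := ℝ)).mpr this
  push_cast at this
  exact this

theorem padicAbvInt_eq_of_pow_dvd_of_not_pow_succ_dvd {k : ℕ} {x : ℤ} (hk : (p : ℤ) ^ k ∣ x)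
    (hk1 : ¬ (p : ℤ) ^ (k + 1) ∣ x) : padicAbvInt p x = (p : ℝ) ^ (-(k : ℤ)) := by
  have hx : x ≠ 0 := fun hz => hk1 (hz ▸ dvd_zero _)
  have hle := ((padicValInt_dvd_iff k x).mp hk).resolve_left hx
  have hlt : ¬ k + 1 ≤ padicValInt p x := fun h => hk1 ((padicValInt_dvd_iff _ x).mpr (Or.inr h))
  rw [padicAbvInt_of_ne_zero hx, show padicValInt p x = k by omega]

theorem mul_padicValInt_eq_of_padicAbvInt_eq_pow {x : ℤ} (hx : x ≠ 0) {c : ℝ} {n k d : ℕ}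
    (hcn : c ^ n = (p : ℝ) ^ (-(k : ℤ))) (hxc : padicAbvInt p x = c ^ d) :
    n * padicValInt p x = k * d := by
  have hp : (1 : ℝ) < p := by exact_mod_cast (Fact.out : p.Prime).one_lt
  have h : (p : ℝ) ^ (-(padicValInt p x : ℤ) * n) = (p : ℝ) ^ (-(k : ℤ) * d) := calc
    _ = (padicAbvInt p x) ^ n := by rw [padicAbvInt_of_ne_zero hx, zpow_mul, zpow_natCast]
    _ = (c ^ n) ^ d := by rw [hxc, ← pow_mul, ← pow_mul, mul_comm]
    _ = _ := by rw [hcn, zpow_mul, zpow_natCast]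
  have := zpow_right_injective₀ (by positivity) hp.ne' h
  zify
  linarith

end PadicAbvInt

namespace Polynomial

variable {p : ℕ} [Fact p.Prime]

theorem gaussNorm_padicAbvInt_eq_pow_natDegree {f : ℤ[X]} {k : ℕ} {c : ℝ} (hc : 0 < c)
    (hcn : c ^ f.natDegree = (p : ℝ) ^ (-(k : ℤ)))
    (hdvd : ∀ i < f.natDegree, (p : ℤ) ^ k ∣ f.coeff i)
    (hlead : ¬ (p : ℤ) ∣ f.coeff f.natDegree) :
    f.gaussNorm (padicAbvInt p) c = c ^ f.natDegree := by
  have hvn := padicAbvInt_eq_one_of_not_dvd hlead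
  refine (gaussNorm_eq_of_forall_le hc.le fun j => ?_).trans (by rw [hvn, one_mul])
  rw [hvn, one_mul]
  rcases lt_trichotomy j f.natDegree with hj | hj | hj
  · have hp : (1 : ℝ) ≤ p := by exact_mod_cast (Fact.out : p.Prime).one_le
    have hcn1 : c ^ f.natDegree ≤ 1 := hcn ▸ zpow_le_one_of_nonpos₀ hp (by simp)
    have hc1 : c ≤ 1 := (pow_le_one_iff_of_nonneg hc.le (by omega)).mp hcn1
    calc padicAbvInt p (f.coeff j) * c ^ j ≤ (p : ℝ) ^ (-(k : ℤ)) * 1 :=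
          mul_le_mul (padicAbvInt_le_of_pow_dvd (hdvd j hj)) (pow_le_one₀ hc.le hc1)
            (by positivity) (by positivity)
      _ = c ^ f.natDegree := by rw [mul_one, hcn]
  · rw [hj, hvn, one_mul]
  · rw [coeff_eq_zero_of_natDegree_lt hj, map_zero, zero_mul]
    positivity

theorem natDegree_mul_padicValInt_coeff_zero_eq {f g h : ℤ[X]} {k : ℕ} (hfgh : f = g * h)
    (hdvd : ∀ i < f.natDegree, (p : ℤ) ^ k ∣ f.coeff i)
    (hlead : ¬ (p : ℤ) ∣ f.coeff f.natDegree) (h0 : ¬ (p : ℤ) ^ (k + 1) ∣ f.coeff 0) :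
    f.natDegree * padicValInt p (g.coeff 0) = k * g.natDegree := by
  have hf0 : f.coeff 0 ≠ 0 := fun hz => h0 (hz ▸ dvd_zero _)
  have hg : g ≠ 0 := by rintro rfl; simp [hfgh] at hf0
  have hh : h ≠ 0 := by rintro rfl; simp [hfgh] at hf0
  have hdeg : f.natDegree = g.natDegree + h.natDegree := by rw [hfgh, natDegree_mul hg hh]
  have hlead_mul : f.coeff f.natDegree = g.leadingCoeff * h.leadingCoeff := by
    rw [hdeg, hfgh, coeff_mul_degree_add_degree]
  rcases f.natDegree.eq_zero_or_pos with hn | hn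
  · simp [hn, show g.natDegree = 0 by omega]
  set c : ℝ := ((p : ℝ) ^ (-(k : ℤ))) ^ ((f.natDegree : ℝ)⁻¹)
  have hp : (0 : ℝ) < p := by exact_mod_cast (Fact.out : p.Prime).pos
  have hc : 0 < c := by positivity
  have hcn : c ^ f.natDegree = (p : ℝ) ^ (-(k : ℤ)) :=
    Real.rpow_inv_natCast_pow (by positivity) hn.ne'
  have hF := gaussNorm_padicAbvInt_eq_pow_natDegree hc hcn hdvd hlead
  have hv0 : padicAbvInt p (f.coeff 0) = c ^ f.natDegree :=
    (padicAbvInt_eq_of_pow_dvd_of_not_pow_succ_dvd (hdvd 0 hn) h0).trans hcn.symm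
  have hg_zero : g.gaussNorm (padicAbvInt p) c = padicAbvInt p (g.coeff 0) := by
    simpa using gaussNorm_eq_of_gaussNorm_mul_eq (i := 0) (j := 0) isNonarchimedean_padicAbvInt hc
      (by simp [mul_coeff_zero]) (by simpa [hfgh] using hf0) (by simpa [← hfgh, hv0] using hF)
  have hg_lead : g.gaussNorm (padicAbvInt p) c = c ^ g.natDegree := by
    rw [gaussNorm_eq_of_gaussNorm_mul_eq isNonarchimedean_padicAbvInt hc
      (coeff_mul_degree_add_degree g h)
      (by rw [← hfgh, ← hdeg]; exact fun hz => hlead (hz ▸ dvd_zero _))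
      (by rw [← hfgh, ← hdeg, hF, padicAbvInt_eq_one_of_not_dvd hlead, one_mul]), coeff_natDegree,
      padicAbvInt_eq_one_of_not_dvd fun hpg => hlead (hlead_mul ▸ hpg.mul_right _), one_mul]
  have hg0 : g.coeff 0 ≠ 0 := left_ne_zero_of_mul (by rwa [hfgh, mul_coeff_zero] at hf0)
  exact mul_padicValInt_eq_of_padicAbvInt_eq_pow hg0 hcn (hg_zero.symm.trans hg_lead)

end Polynomial

theorem stmt4_general (f : Polynomial ℤ) (p k : ℕ) (hp : p.Prime)
    (hn : 0 < f.natDegree)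
    (hprim : f.IsPrimitive)
    (hgcd : Nat.gcd k f.natDegree = 1)
    (hdvd : ∀ i < f.natDegree, (p : ℤ) ^ k ∣ f.coeff i)
    (hlead : ¬ (p : ℤ) ∣ f.coeff f.natDegree)
    (h0 : ¬ (p : ℤ) ^ (k + 1) ∣ f.coeff 0) :
    Irreducible f := by
  have : Fact p.Prime := ⟨hp⟩
  refine hprim.irreducible_of_forall_mul_eq hn fun g h hfgh => ?_
  by_contra! hpos
  have hdeg : f.natDegree = g.natDegree + h.natDegree := by
    rw [hfgh, natDegree_mul (by rintro rfl; simp_all) (by rintro rfl; simp_all)]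
  have hslope := natDegree_mul_padicValInt_coeff_zero_eq hfgh hdvd hlead h0
  have hdvd_deg : f.natDegree ∣ g.natDegree :=
    (Nat.coprime_comm.mp hgcd).dvd_of_dvd_mul_left (Dvd.intro _ hslope)
  have := Nat.le_of_dvd (Nat.pos_of_ne_zero hpos.1) hdvd_deg
  omega

theorem stmt4 (f : Polynomial ℤ) (p k : ℕ) (hp : p.Prime) (hk : 0 < k)
    (hn : 0 < f.natDegree)
    (hprim : f.IsPrimitive)
    (hgcd : Nat.gcd k f.natDegree = 1)
    (hdvd : ∀ i < f.natDegree, (p : ℤ) ^ k ∣ f.coeff i)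
    (hlead : ¬ (p : ℤ) ∣ f.coeff f.natDegree)
    (h0 : ¬ (p : ℤ) ^ (k + 1) ∣ f.coeff 0) :
    Irreducible f :=
  stmt4_general f p k hp hn hprim hgcd hdvd hlead h0
end

section
/- Let f, f₁, f₂ ∈ ℤ[x] be non-constant with f = f₁·f₂, and write aₜ, bₜ, cₜ for the coefficients of f, f₁, f₂. Suppose p is a prime, j ≤ n = deg f, and k > j are positive integers with gcd(k, j!) = 1, pᵏ divides each of a₀, …, a_{j−1}, p^{k+1} ∤ a₀, p | b₀ and p | c₀. Then p divides aⱼ. -/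
open Polynomial Finset

theorem stmt5 (f f₁ f₂ : Polynomial ℤ)
    (hf₁ : 0 < f₁.natDegree) (hf₂ : 0 < f₂.natDegree)
    (hmul : f = f₁ * f₂)
    (p k j : ℕ) (hp : p.Prime) (hj1 : 1 ≤ j) (hjn : j ≤ f.natDegree)
    (hkj : j < k) (hgcd : Nat.gcd k (Nat.factorial j) = 1)
    (hdvd : ∀ i < j, (p : ℤ) ^ k ∣ f.coeff i)
    (hnd : ¬ (p : ℤ) ^ (k + 1) ∣ f.coeff 0)
    (hb0 : (p : ℤ) ∣ f₁.coeff 0) (hc0 : (p : ℤ) ∣ f₂.coeff 0) :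
    (p : ℤ) ∣ f.coeff j := by
  classical
  haveI : Fact p.Prime := ⟨hp⟩
  set v : ℤ → ℕ := padicValInt p with hvdef
  have hdvd_iff : ∀ (x : ℤ), x ≠ 0 → ∀ n : ℕ, ((p:ℤ)^n ∣ x ↔ n ≤ v x) := by
    intro x hx n; rw [hvdef, padicValInt_dvd_iff]; simp [hx]
  have hvmul : ∀ x y : ℤ, x ≠ 0 → y ≠ 0 → v (x*y) = v x + v y :=
    fun x y hx hy => padicValInt.mul hx hy
  -- constant coefficients
  have ha0 : f.coeff 0 = f₁.coeff 0 * f₂.coeff 0 := by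
    rw [hmul, Polynomial.mul_coeff_zero]
  have ha0ne : f.coeff 0 ≠ 0 := fun h => hnd (by rw [h]; exact dvd_zero _)
  have hb0ne : f₁.coeff 0 ≠ 0 := fun h => ha0ne (by rw [ha0, h, zero_mul])
  have hc0ne : f₂.coeff 0 ≠ 0 := fun h => ha0ne (by rw [ha0, h, mul_zero])
  set α := v (f₁.coeff 0) with hαdef
  set β := v (f₂.coeff 0) with hβdef
  have hva0 : v (f.coeff 0) = α + β := by rw [ha0]; exact hvmul _ _ hb0ne hc0ne
  have hαβ : α + β = k := by
    have h1 : k ≤ v (f.coeff 0) := (hdvd_iff _ ha0ne k).mp (hdvd 0 hj1)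
    have h2 : ¬ (k+1 ≤ v (f.coeff 0)) := fun h => hnd ((hdvd_iff _ ha0ne (k+1)).mpr h)
    omega
  have hα1 : 1 ≤ α := (hdvd_iff _ hb0ne 1).mp (by simpa using hb0)
  have hβ1 : 1 ≤ β := (hdvd_iff _ hc0ne 1).mp (by simpa using hc0)
  -- supports
  have hf₁ne : f₁ ≠ 0 := fun h => hb0ne (by rw [h]; simp)
  have hf₂ne : f₂ ≠ 0 := fun h => hc0ne (by rw [h]; simp)
  have hS₁ : f₁.support.Nonempty := Polynomial.support_nonempty.mpr hf₁ne
  have hS₂ : f₂.support.Nonempty := Polynomial.support_nonempty.mpr hf₂ne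
  set w₁ : ℕ → ℕ := fun i => j * v (f₁.coeff i) + k * i with hw₁def
  set w₂ : ℕ → ℕ := fun i => j * v (f₂.coeff i) + k * i with hw₂def
  set m₁ := f₁.support.inf' hS₁ w₁ with hm₁def
  set m₂ := f₂.support.inf' hS₂ w₂ with hm₂def
  have hm₁le : ∀ i, f₁.coeff i ≠ 0 → m₁ ≤ w₁ i := fun i hi =>
    Finset.inf'_le _ (Polynomial.mem_support_iff.mpr hi)
  have hm₂le : ∀ i, f₂.coeff i ≠ 0 → m₂ ≤ w₂ i := fun i hi =>
    Finset.inf'_le _ (Polynomial.mem_support_iff.mpr hi)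
  have hex₁ : ∃ i, i ∈ f₁.support ∧ w₁ i = m₁ := by
    obtain ⟨i, hi, hwi⟩ := Finset.exists_mem_eq_inf' hS₁ w₁
    exact ⟨i, hi, hwi.symm⟩
  have hex₂ : ∃ i, i ∈ f₂.support ∧ w₂ i = m₂ := by
    obtain ⟨i, hi, hwi⟩ := Finset.exists_mem_eq_inf' hS₂ w₂
    exact ⟨i, hi, hwi.symm⟩
  set i₁ := Nat.find hex₁ with hi₁def
  set i₂ := Nat.find hex₂ with hi₂def
  obtain ⟨hi₁mem, hi₁w⟩ := Nat.find_spec hex₁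
  obtain ⟨hi₂mem, hi₂w⟩ := Nat.find_spec hex₂
  have hi₁ne : f₁.coeff i₁ ≠ 0 := Polynomial.mem_support_iff.mp hi₁mem
  have hi₂ne : f₂.coeff i₂ ≠ 0 := Polynomial.mem_support_iff.mp hi₂mem
  have hlt₁ : ∀ s, s < i₁ → f₁.coeff s ≠ 0 → m₁ < w₁ s := by
    intro s hs hsne
    have := Nat.find_min hex₁ hs
    have h2 := hm₁le s hsne
    have : w₁ s ≠ m₁ := fun h => this ⟨Polynomial.mem_support_iff.mpr hsne, h⟩
    omega
  have hlt₂ : ∀ s, s < i₂ → f₂.coeff s ≠ 0 → m₂ < w₂ s := by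
    intro s hs hsne
    have := Nat.find_min hex₂ hs
    have h2 := hm₂le s hsne
    have : w₂ s ≠ m₂ := fun h => this ⟨Polynomial.mem_support_iff.mpr hsne, h⟩
    omega
  set I := i₁ + i₂ with hIdef
  set q := v (f₁.coeff i₁) + v (f₂.coeff i₂) with hqdef
  have hq : j * q + k * I = m₁ + m₂ := by
    rw [← hi₁w, ← hi₂w]
    simp only [hw₁def, hw₂def, hqdef, hIdef, hi₁def, hi₂def, Nat.mul_add]
    ring
  -- strict divisibility of off-diagonal terms
  have hstrict : ∀ x : ℕ × ℕ, x.1 + x.2 = I → x ≠ (i₁, i₂) →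
      (p:ℤ)^(q+1) ∣ f₁.coeff x.1 * f₂.coeff x.2 := by
    rintro ⟨s, u⟩ hsu hne
    by_cases hbs : f₁.coeff s = 0
    · rw [hbs, zero_mul]; exact dvd_zero _
    by_cases hcu : f₂.coeff u = 0
    · rw [hcu, mul_zero]; exact dvd_zero _
    have hprodne : f₁.coeff s * f₂.coeff u ≠ 0 := mul_ne_zero hbs hcu
    rw [hdvd_iff _ hprodne, hvmul _ _ hbs hcu]
    have hsne : s ≠ i₁ := by
      intro h; apply hne; simp only [hIdef] at hsu; apply Prod.ext <;> simp <;> omega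
    rcases lt_or_gt_of_ne hsne with h | h
    · -- s < i₁
      have h1 : m₁ + 1 ≤ w₁ s := hlt₁ s h hbs
      have h2 : m₂ ≤ w₂ u := hm₂le u hcu
      have h3 : m₁ + m₂ + 1 ≤ j * (v (f₁.coeff s) + v (f₂.coeff u)) + k * I := by
        simp only [hw₁def, hw₂def] at h1 h2
        have : k * I = k * s + k * u := by rw [← hsu]; ring
        rw [this, Nat.mul_add]
        omega
      rw [← hq] at h3
      have : j * q < j * (v (f₁.coeff s) + v (f₂.coeff u)) := by omega
      exact Nat.lt_of_mul_lt_mul_left this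
    · -- s > i₁, so u < i₂
      have hu : u < i₂ := by omega
      have h1 : m₂ + 1 ≤ w₂ u := hlt₂ u hu hcu
      have h2 : m₁ ≤ w₁ s := hm₁le s hbs
      have h3 : m₁ + m₂ + 1 ≤ j * (v (f₁.coeff s) + v (f₂.coeff u)) + k * I := by
        simp only [hw₁def, hw₂def] at h1 h2
        have : k * I = k * s + k * u := by rw [← hsu]; ring
        rw [this, Nat.mul_add]
        omega
      rw [← hq] at h3
      have : j * q < j * (v (f₁.coeff s) + v (f₂.coeff u)) := by omega
      exact Nat.lt_of_mul_lt_mul_left this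
  -- coefficient of f at I
  have hcoeffI : f.coeff I = ∑ x ∈ antidiagonal I, f₁.coeff x.1 * f₂.coeff x.2 := by
    rw [hmul]; exact Polynomial.coeff_mul f₁ f₂ I
  have hmemI : (i₁, i₂) ∈ antidiagonal I := by simp [hIdef]
  have hsplit : f.coeff I = f₁.coeff i₁ * f₂.coeff i₂ +
      ∑ x ∈ (antidiagonal I).erase (i₁, i₂), f₁.coeff x.1 * f₂.coeff x.2 := by
    rw [hcoeffI, ← Finset.add_sum_erase _ _ hmemI]
  have hrest : (p:ℤ)^(q+1) ∣ ∑ x ∈ (antidiagonal I).erase (i₁, i₂),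
      f₁.coeff x.1 * f₂.coeff x.2 := by
    apply Finset.dvd_sum
    intro x hx
    have hxne : x ≠ (i₁, i₂) := Finset.ne_of_mem_erase hx
    have hxmem : x ∈ antidiagonal I := Finset.mem_of_mem_erase hx
    exact hstrict x (Finset.HasAntidiagonal.mem_antidiagonal.mp hxmem) hxne
  have hprodI_ne : f₁.coeff i₁ * f₂.coeff i₂ ≠ 0 := mul_ne_zero hi₁ne hi₂ne
  have hnotdvdprod : ¬ (p:ℤ)^(q+1) ∣ f₁.coeff i₁ * f₂.coeff i₂ := by
    rw [hdvd_iff _ hprodI_ne, hvmul _ _ hi₁ne hi₂ne, ← hqdef]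
    omega
  have hnotdvdI : ¬ (p:ℤ)^(q+1) ∣ f.coeff I := by
    intro h
    apply hnotdvdprod
    have : f₁.coeff i₁ * f₂.coeff i₂ = f.coeff I - ∑ x ∈ (antidiagonal I).erase (i₁, i₂),
        f₁.coeff x.1 * f₂.coeff x.2 := by rw [hsplit]; ring
    rw [this]
    exact dvd_sub h hrest
  have haIne : f.coeff I ≠ 0 := fun h => hnotdvdI (by rw [h]; exact dvd_zero _)
  -- key bound : j * k ≤ m₁ + m₂
  have hjk : j * k ≤ m₁ + m₂ := by
    rcases lt_or_ge I j with hIj | hIj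
    · have hk : k ≤ v (f.coeff I) := (hdvd_iff _ haIne k).mp (hdvd I hIj)
      have hq' : ¬ (q + 1 ≤ v (f.coeff I)) := fun h => hnotdvdI ((hdvd_iff _ haIne _).mpr h)
      have hkq : k ≤ q := by omega
      calc j * k ≤ j * q := Nat.mul_le_mul_left j hkq
        _ ≤ j * q + k * I := Nat.le_add_right _ _
        _ = m₁ + m₂ := hq
    · calc j * k = k * j := Nat.mul_comm j k
        _ ≤ k * I := Nat.mul_le_mul_left k hIj
        _ ≤ j * q + k * I := Nat.le_add_left _ _
        _ = m₁ + m₂ := hq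
  -- deduce m₁ = j*α, m₂ = j*β
  have hm₁ub : m₁ ≤ j * α := by
    have := hm₁le 0 hb0ne
    simpa [hw₁def, hαdef] using this
  have hm₂ub : m₂ ≤ j * β := by
    have := hm₂le 0 hc0ne
    simpa [hw₂def, hβdef] using this
  have hsumeq : j * α + j * β = j * k := by rw [← Nat.mul_add, hαβ]
  have hm₁eq : m₁ = j * α := by omega
  have hm₂eq : m₂ = j * β := by omega
  -- final step
  have hco : Nat.Coprime k j := Nat.Coprime.coprime_dvd_right (Nat.dvd_factorial hj1 le_rfl) hgcd
  have hcoeffj : f.coeff j = ∑ x ∈ antidiagonal j, f₁.coeff x.1 * f₂.coeff x.2 := by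
    rw [hmul]; exact Polynomial.coeff_mul f₁ f₂ j
  rw [hcoeffj]
  apply Finset.dvd_sum
  rintro ⟨s, u⟩ hx
  have hsu : s + u = j := Finset.HasAntidiagonal.mem_antidiagonal.mp hx
  by_cases hbs : f₁.coeff s = 0
  · rw [hbs, zero_mul]; exact dvd_zero _
  by_cases hcu : f₂.coeff u = 0
  · rw [hcu, mul_zero]; exact dvd_zero _
  by_contra hnp
  have hpb : ¬ (p:ℤ) ∣ f₁.coeff s := fun h => hnp (Dvd.dvd.mul_right h _)
  have hpc : ¬ (p:ℤ) ∣ f₂.coeff u := fun h => hnp (Dvd.dvd.mul_left h _)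
  have hvb : v (f₁.coeff s) = 0 := padicValInt.eq_zero_of_not_dvd hpb
  have hvc : v (f₂.coeff u) = 0 := padicValInt.eq_zero_of_not_dvd hpc
  have h1 : j * α ≤ k * s := by
    have := hm₁le s hbs
    rw [hm₁eq, hw₁def] at this
    simp only at this
    rw [hvb] at this
    omega
  have h2 : j * β ≤ k * u := by
    have := hm₂le u hcu
    rw [hm₂eq, hw₂def] at this
    simp only at this
    rw [hvc] at this
    omega
  have hksku : k * s + k * u = j * k := by
    rw [← Nat.mul_add, hsu]; ring
  have heq1 : j * α = k * s := by omega
  have hjdvd : j ∣ s := by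
    have : j ∣ k * s := ⟨α, heq1.symm⟩
    exact (Nat.Coprime.dvd_of_dvd_mul_left (Nat.coprime_comm.mp hco) this)
  have hsle : s ≤ j := by omega
  rcases Nat.lt_or_ge s j with hslt | hsge
  · have hs0 : s = 0 := Nat.eq_zero_of_dvd_of_lt hjdvd hslt
    rw [hs0] at heq1
    simp at heq1
    omega
  · have hsj : s = j := le_antisymm hsle hsge
    have hu0 : u = 0 := by omega
    rw [hu0] at h2
    simp at h2
    omega
end
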